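/- Let t > 0 and z ∈ ℂ with |Im z| < t. Define S(t,z) = Σ_{k=0}^∞ 2·sin(z)/(cosh((2k+1)t) − cos(z)) (the series converges absolutely). Then |S(t,z)| ≤ 4·e^{|Im z|−t} / ((1 − e^{|Im z|−t})²·(1 − e^{2(|Im z|−t)})). -/

import Mathlib

/-!
With `a = |Im z|` and `T ≥ t`, one has `‖sin z‖ ≤ e^a` and
`‖cosh T - cos z‖ ≥ cosh T - cosh a ≥ e^T (1 - e^(a-T))² / 2`, so the term with
`T = (2k+1)t` is at most `4 r^(2k+1) / (1 - r)²` for `r = e^(a-t)`, because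
`a - (2k+1)t ≤ (2k+1)(a - t)`.
Summing this geometric series in `r²` gives the bound.
-/

namespace Complex

lemma norm_exp_mul_I (z : ℂ) : ‖exp (z * I)‖ = Real.exp (-z.im) := by
  simp [norm_exp]

lemma norm_sin_le_cosh_im (z : ℂ) : ‖sin z‖ ≤ Real.cosh z.im := by
  have h := norm_sub_le (exp (-z * I)) (exp (z * I))
  rw [neg_mul, ← neg_mul, norm_exp_mul_I, norm_exp_mul_I, neg_im, neg_neg] at h
  rw [sin, norm_div, norm_mul, norm_I, mul_one, Complex.norm_ofNat, Real.cosh_eq]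
  linarith

lemma norm_cos_le_cosh_im (z : ℂ) : ‖cos z‖ ≤ Real.cosh z.im := by
  have h := norm_add_le (exp (z * I)) (exp (-z * I))
  rw [norm_exp_mul_I, norm_exp_mul_I, neg_im, neg_neg] at h
  rw [cos, norm_div, Complex.norm_ofNat, Real.cosh_eq]
  linarith

end Complex

namespace Real

lemma cosh_le_exp_abs (x : ℝ) : cosh x ≤ exp |x| := by
  rw [← cosh_abs, cosh_eq]
  linarith [exp_le_exp.mpr (neg_le_self (abs_nonneg x))]

lemma cosh_sub_cosh_eq (a T : ℝ) :
    cosh T - cosh a = exp T * (1 - exp (a - T)) ^ 2 / 2 + (1 - exp (a - T)) * sinh a := by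
  rw [cosh_eq, cosh_eq, sinh_eq, exp_sub, exp_neg, exp_neg]
  field_simp
  ring

lemma exp_mul_one_sub_exp_sub_sq_le_cosh_sub_cosh {a T : ℝ} (ha : 0 ≤ a) (haT : a ≤ T) :
    exp T * (1 - exp (a - T)) ^ 2 / 2 ≤ cosh T - cosh a := by
  rw [cosh_sub_cosh_eq]
  have : exp (a - T) ≤ 1 := exp_le_one_iff.mpr (by linarith)
  have : 0 ≤ sinh a := sinh_nonneg_iff.mpr ha
  nlinarith

end Real

open Complex in
lemma norm_two_sin_div_cosh_sub_cos_le {z : ℂ} {T : ℝ} (hT : |z.im| < T) :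
    ‖2 * sin z / (Real.cosh T - cos z)‖ ≤
      4 * Real.exp (|z.im| - T) / (1 - Real.exp (|z.im| - T)) ^ 2 := by
  set a := |z.im|
  set x := Real.exp (a - T)
  have hx1 : 0 < 1 - x := sub_pos.mpr (Real.exp_lt_one_iff.mpr (by linarith))
  have hnum : ‖2 * sin z‖ ≤ 2 * Real.exp a := by
    rw [norm_mul, Complex.norm_ofNat]
    gcongr
    exact (norm_sin_le_cosh_im z).trans (Real.cosh_le_exp_abs _)
  have hden : Real.exp T * (1 - x) ^ 2 / 2 ≤ ‖(Real.cosh T : ℂ) - cos z‖ := by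
    calc Real.exp T * (1 - x) ^ 2 / 2 ≤ Real.cosh T - Real.cosh a :=
          Real.exp_mul_one_sub_exp_sub_sq_le_cosh_sub_cosh (abs_nonneg _) hT.le
      _ ≤ ‖(Real.cosh T : ℂ)‖ - ‖cos z‖ := by
          rw [norm_real, Real.norm_of_nonneg (Real.cosh_pos T).le, Real.cosh_abs]
          linarith [norm_cos_le_cosh_im z]
      _ ≤ _ := norm_sub_norm_le _ _
  have hexp : Real.exp a = x * Real.exp T := by rw [← Real.exp_add]; ring_nf
  calc ‖2 * sin z / (Real.cosh T - cos z)‖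
      ≤ 2 * Real.exp a / (Real.exp T * (1 - x) ^ 2 / 2) := by
        rw [norm_div]; exact div_le_div₀ (by positivity) hnum (by positivity) hden
    _ = 4 * x / (1 - x) ^ 2 := by
        rw [hexp]; field_simp; ring

open Complex in
lemma norm_two_sin_div_cosh_odd_mul_sub_cos_le {t : ℝ} {z : ℂ} (hz : |z.im| < t) (k : ℕ) :
    ‖2 * sin z / (Real.cosh ((2 * (k : ℝ) + 1) * t) - cos z)‖ ≤
      4 * Real.exp (|z.im| - t) / (1 - Real.exp (|z.im| - t)) ^ 2 *
        (Real.exp (|z.im| - t) ^ 2) ^ k := by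
  set a := |z.im|
  set r := Real.exp (a - t)
  have ha : 0 ≤ a := abs_nonneg _
  have hk : (1 : ℝ) ≤ 2 * k + 1 := by linarith [k.cast_nonneg (α := ℝ)]
  have hr1 : r < 1 := Real.exp_lt_one_iff.mpr (by linarith)
  have hT : a < (2 * k + 1) * t := hz.trans_le (le_mul_of_one_le_left (ha.trans hz.le) hk)
  have hx_le : Real.exp (a - (2 * k + 1) * t) ≤ r * (r ^ 2) ^ k := by
    rw [← pow_mul, ← pow_succ', ← Real.exp_nat_mul]
    gcongr
    push_cast
    nlinarith
  have hx_le_r : Real.exp (a - (2 * k + 1) * t) ≤ r :=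
    Real.exp_le_exp.mpr (by nlinarith)
  refine (norm_two_sin_div_cosh_sub_cos_le hT).trans ?_
  rw [div_mul_eq_mul_div, mul_assoc]
  gcongr

theorem annulus_kernel_series_bound_general (t : ℝ) (z : ℂ) (hz : |z.im| < t) :
    Summable (fun k : ℕ => ‖(2 * Complex.sin z /
        ((Real.cosh ((2 * (k : ℝ) + 1) * t) : ℂ) - Complex.cos z))‖) ∧
      ‖(∑' k : ℕ, 2 * Complex.sin z /
          ((Real.cosh ((2 * (k : ℝ) + 1) * t) : ℂ) - Complex.cos z))‖ ≤
        4 * Real.exp (|z.im| - t) /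
          ((1 - Real.exp (|z.im| - t)) ^ 2 * (1 - Real.exp (2 * (|z.im| - t)))) := by
  set r := Real.exp (|z.im| - t)
  have hr1 : r ^ 2 < 1 :=
    pow_lt_one₀ (Real.exp_nonneg _) (Real.exp_lt_one_iff.mpr (by linarith)) two_ne_zero
  have hgeo := (hasSum_geometric_of_lt_one (sq_nonneg r) hr1).mul_left (4 * r / (1 - r) ^ 2)
  have hterm := norm_two_sin_div_cosh_odd_mul_sub_cos_le hz
  refine ⟨hgeo.summable.of_nonneg_of_le (fun _ => norm_nonneg _) hterm, ?_⟩
  have hr2 : Real.exp (2 * (|z.im| - t)) = r ^ 2 := by rw [← Real.exp_nat_mul]; norm_num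
  rw [hr2, ← div_div, div_eq_mul_inv _ (1 - r ^ 2)]
  exact tsum_of_norm_bounded hgeo hterm

theorem annulus_kernel_series_bound (t : ℝ) (ht : 0 < t) (z : ℂ) (hz : |z.im| < t) :
    Summable (fun k : ℕ => ‖(2 * Complex.sin z /
        ((Real.cosh ((2 * (k : ℝ) + 1) * t) : ℂ) - Complex.cos z))‖) ∧
      ‖(∑' k : ℕ, 2 * Complex.sin z /
          ((Real.cosh ((2 * (k : ℝ) + 1) * t) : ℂ) - Complex.cos z))‖ ≤
        4 * Real.exp (|z.im| - t) /
          ((1 - Real.exp (|z.im| - t)) ^ 2 * (1 - Real.exp (2 * (|z.im| - t)))) :=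
  annulus_kernel_series_bound_general t z hz
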